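/- arXiv:1903.11460 — 3 statements merged into one kernel-verified Lean document; each statement's English description precedes it below -/
import Mathlib

section
/- Let p be a norm on ℝⁿ that is weakly decomposable for an index set S ⊆ {1,…,n}. Then for every β ∈ ℝⁿ one has p_*(β) ≤ max{ p_*(β_S), (p^{S̄})_*(β^{S̄}) }, where p_* and (p^{S̄})_* denote the dual norms of p and p^{S̄} respectively. -/
open scoped RealInnerProductSpace

noncomputable section

/-- A function `p` is a norm on a real vector space. -/
def IsNorm {E : Type*} [AddCommGroup E] [Module ℝ E] (p : E → ℝ) : Prop :=
  (∀ x y, p (x + y) ≤ p x + p y) ∧ (∀ (c : ℝ) (x : E), p (c • x) = |c| * p x) ∧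
    (∀ x, p x = 0 ↔ x = 0)

/-- The dual norm `q_*(z) = sup {⟨z, β⟩ : q β ≤ 1}`. -/
def dualNorm {ι : Type*} [Fintype ι] (q : EuclideanSpace ℝ ι → ℝ)
    (z : EuclideanSpace ℝ ι) : ℝ :=
  sSup {r : ℝ | ∃ β : EuclideanSpace ℝ ι, q β ≤ 1 ∧ r = ⟪z, β⟫}

/-- `β_S`: the vector agreeing with `β` on `S` and zero on the complement. -/
def projS {n : ℕ} (S : Finset (Fin n)) (β : EuclideanSpace ℝ (Fin n)) :
    EuclideanSpace ℝ (Fin n) :=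
  WithLp.toLp 2 (fun i => if i ∈ S then β i else 0)

/-- `β_{S̄}`: the vector agreeing with `β` on the complement of `S` and zero on `S`. -/
def projSc {n : ℕ} (S : Finset (Fin n)) (β : EuclideanSpace ℝ (Fin n)) :
    EuclideanSpace ℝ (Fin n) :=
  WithLp.toLp 2 (fun i => if i ∈ S then 0 else β i)

/-- `β^{S̄}`: the restriction of `β` to the complement of `S`. -/
def restrC {n : ℕ} (S : Finset (Fin n)) (β : EuclideanSpace ℝ (Fin n)) :
    EuclideanSpace ℝ {i : Fin n // i ∉ S} :=
  WithLp.toLp 2 (fun j => β j.1)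

/-- Matrix-vector multiplication as a map between Euclidean spaces. -/
def mulVecE {m n : ℕ} (X : Matrix (Fin m) (Fin n) ℝ) (β : EuclideanSpace ℝ (Fin n)) :
    EuclideanSpace ℝ (Fin m) :=
  WithLp.toLp 2 (X.mulVec β)

/-! Split `⟪β, γ⟫` along `S` and `S̄` and bound each piece by the corresponding dual norm. When
`p γ ≤ 1`, weak decomposability makes the weights `p γ_S` and `p^{S̄} γ^{S̄}` sum to at most `1`,
so the total is at most the larger of the two dual norms. The dual norms are genuine suprema (not
the junk value of `sSup` of an unbounded set) because every norm on a finite-dimensional space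
dominates a multiple of the Euclidean norm. -/

namespace IsNorm

section Module

variable {E : Type*} [AddCommGroup E] [Module ℝ E] {p : E → ℝ}

def toSeminorm (hp : IsNorm p) : Seminorm ℝ E :=
  Seminorm.of p hp.1 fun c x => by rw [hp.2.1, Real.norm_eq_abs]

lemma nonneg (hp : IsNorm p) (x : E) : 0 ≤ p x :=
  apply_nonneg hp.toSeminorm x

lemma map_zero (hp : IsNorm p) : p 0 = 0 :=
  (hp.2.2 0).2 rfl

lemma pos_of_ne_zero (hp : IsNorm p) {x : E} (hx : x ≠ 0) : 0 < p x :=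
  (hp.nonneg x).lt_of_ne fun h => hx ((hp.2.2 x).1 h.symm)

end Module

variable {E : Type*} [NormedAddCommGroup E] [NormedSpace ℝ E] [FiniteDimensional ℝ E]
  {p : E → ℝ}

lemma continuous (hp : IsNorm p) : Continuous p :=
  continuousOn_univ.1 (hp.toSeminorm.convexOn.continuousOn isOpen_univ)

lemma exists_norm_le_mul (hp : IsNorm p) : ∃ C, ∀ x, ‖x‖ ≤ C * p x := by
  have hinv : ContinuousOn (fun x => (p x)⁻¹) (Metric.sphere (0 : E) 1) :=
    hp.continuous.continuousOn.inv₀ fun x hx =>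
      (hp.pos_of_ne_zero (ne_zero_of_mem_unit_sphere ⟨x, hx⟩)).ne'
  obtain ⟨C, hC⟩ := (isCompact_sphere (0 : E) 1).exists_bound_of_continuousOn hinv
  refine ⟨C, fun x => ?_⟩
  rcases eq_or_ne x 0 with rfl | hx
  · simp [hp.map_zero]
  have hpx := hp.pos_of_ne_zero hx
  have hunit : ‖x‖⁻¹ • x ∈ Metric.sphere (0 : E) 1 := by simp [norm_smul, hx]
  have h := hC _ hunit
  rwa [hp.2.1, abs_inv, abs_norm, norm_inv, Real.norm_eq_abs, abs_of_pos (by positivity),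
    mul_inv, inv_inv, ← div_eq_mul_inv, div_le_iff₀ hpx] at h

end IsNorm

section DualNorm

variable {ι : Type*} [Fintype ι] {q : EuclideanSpace ℝ ι → ℝ}

lemma IsNorm.bddAbove_dualNorm_set (hq : IsNorm q) (z : EuclideanSpace ℝ ι) :
    BddAbove {r : ℝ | ∃ β : EuclideanSpace ℝ ι, q β ≤ 1 ∧ r = ⟪z, β⟫} := by
  obtain ⟨C, hC⟩ := hq.exists_norm_le_mul
  refine ⟨‖z‖ * |C|, ?_⟩
  rintro _ ⟨β, hβ, rfl⟩
  calc ⟪z, β⟫ ≤ ‖z‖ * ‖β‖ := real_inner_le_norm z β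
    _ ≤ ‖z‖ * (C * q β) := by gcongr; exact hC β
    _ ≤ ‖z‖ * (|C| * 1) :=
      mul_le_mul_of_nonneg_left (mul_le_mul (le_abs_self C) hβ (hq.nonneg β) (abs_nonneg C))
        (norm_nonneg z)
    _ = ‖z‖ * |C| := by rw [mul_one]

lemma dualNorm_nonneg (hq : IsNorm q) (z : EuclideanSpace ℝ ι) : 0 ≤ dualNorm q z :=
  le_csSup (hq.bddAbove_dualNorm_set z) ⟨0, by simp [hq.map_zero], by simp⟩

lemma inner_le_mul_dualNorm (hq : IsNorm q) (z γ : EuclideanSpace ℝ ι) :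
    ⟪z, γ⟫ ≤ q γ * dualNorm q z := by
  rcases eq_or_ne γ 0 with rfl | hγ
  · simp [hq.map_zero]
  have hqγ := hq.pos_of_ne_zero hγ
  have h : ⟪z, (q γ)⁻¹ • γ⟫ ≤ dualNorm q z :=
    le_csSup (hq.bddAbove_dualNorm_set z)
      ⟨_, by rw [hq.2.1, abs_inv, abs_of_pos hqγ, inv_mul_cancel₀ hqγ.ne'], rfl⟩
  rwa [real_inner_smul_right, inv_mul_le_iff₀ hqγ] at h

end DualNorm

lemma inner_eq_inner_projS_add_inner_restrC {n : ℕ} (S : Finset (Fin n))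
    (β γ : EuclideanSpace ℝ (Fin n)) :
    ⟪β, γ⟫ = ⟪projS S β, projS S γ⟫ + ⟪restrC S β, restrC S γ⟫ := by
  simp only [PiLp.inner_apply, projS, restrC]
  rw [← Finset.sum_add_sum_compl S, Finset.sum_subtype Sᶜ fun _ => Finset.mem_compl]
  congr 1
  rw [← Finset.sum_subset S.subset_univ fun i _ hi => by simp [hi]]
  exact Finset.sum_congr rfl fun i hi => by simp [hi]

/-- For a norm `p` weakly decomposable for `S`, the dual norm satisfies
`p_*(β) ≤ max (p_*(β_S)) ((p^{S̄})_*(β^{S̄}))` for every `β`. -/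
theorem dualNorm_le_max_of_weakly_decomposable {n : ℕ} (S : Finset (Fin n))
    (p : EuclideanSpace ℝ (Fin n) → ℝ)
    (psc : EuclideanSpace ℝ {i : Fin n // i ∉ S} → ℝ)
    (hp : IsNorm p) (hpsc : IsNorm psc)
    (hdec : ∀ β : EuclideanSpace ℝ (Fin n), p (projS S β) + psc (restrC S β) ≤ p β) :
    ∀ β : EuclideanSpace ℝ (Fin n),
      dualNorm p β ≤ max (dualNorm p (projS S β)) (dualNorm psc (restrC S β)) := by
  intro β
  set M := max (dualNorm p (projS S β)) (dualNorm psc (restrC S β))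
  have hM : 0 ≤ M := (dualNorm_nonneg hp _).trans (le_max_left _ _)
  refine Real.sSup_le ?_ hM
  rintro _ ⟨γ, hγ, rfl⟩
  have hweights : p (projS S γ) + psc (restrC S γ) ≤ 1 := (hdec γ).trans hγ
  calc ⟪β, γ⟫ = ⟪projS S β, projS S γ⟫ + ⟪restrC S β, restrC S γ⟫ :=
        inner_eq_inner_projS_add_inner_restrC S β γ
    _ ≤ p (projS S γ) * dualNorm p (projS S β) + psc (restrC S γ) * dualNorm psc (restrC S β) :=
        add_le_add (inner_le_mul_dualNorm hp _ _) (inner_le_mul_dualNorm hpsc _ _)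
    _ ≤ p (projS S γ) * M + psc (restrC S γ) * M :=
        add_le_add (mul_le_mul_of_nonneg_left (le_max_left _ _) (hp.nonneg _))
          (mul_le_mul_of_nonneg_left (le_max_right _ _) (hpsc.nonneg _))
    _ = (p (projS S γ) + psc (restrC S γ)) * M := by ring
    _ ≤ M := mul_le_of_le_one_left hM hweights
end
end

section
/- Let τ > 0 and let G : ℝ^m → ℝ^m be the proximal mapping G(u) = Prox_{τ⁻¹‖·‖}(u) = argmin_{y ∈ ℝ^m} { τ⁻¹‖y‖ + (1/2)‖y − u‖² }. If ũ ∈ ℝ^m satisfies ‖ũ‖ > 1/τ, then G is differentiable at ũ with Jacobian V = (1 − 1/(τ‖ũ‖)) I_m + ũũᵀ/(τ‖ũ‖³), and this matrix V is symmetric positive definite. -/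
open scoped RealInnerProductSpace

noncomputable section

/-! For `‖u‖ > c ≥ 0` the minimiser of `c‖y‖ + ½‖y - u‖²` is the radial shrink
`(1 - c/‖u‖) • u`: expanding the objective around that point leaves `c‖y‖ - (c/‖u‖)⟪y, u⟫ ≥ 0`
(Cauchy–Schwarz) plus a square, and the minimiser is unique because the objective is strongly
convex. With `c = τ⁻¹`, `G` therefore coincides with the smooth map `v ↦ (1 - c/‖v‖) • v` on the
open set `{v | c < ‖v‖}`, and `V` is its derivative at `u`. As `V = a • 1 + b • uuᵀ` with `a > 0`
and `b ≥ 0`, it is symmetric and positive definite. -/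

section

variable {E : Type*} [NormedAddCommGroup E] [InnerProductSpace ℝ E]

def proxNormObjective (c : ℝ) (u y : E) : ℝ := c * ‖y‖ + 1 / 2 * ‖y - u‖ ^ 2

theorem proxNormObjective_midpoint_add_le {c : ℝ} (hc : 0 ≤ c) (u a b : E) :
    proxNormObjective c u ((2⁻¹ : ℝ) • (a + b)) + ‖a - b‖ ^ 2 / 8 ≤
      (proxNormObjective c u a + proxNormObjective c u b) / 2 := by
  have hnorm : ‖(2⁻¹ : ℝ) • (a + b)‖ ≤ (‖a‖ + ‖b‖) / 2 := by
    rw [norm_smul, Real.norm_of_nonneg (by norm_num)]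
    linarith [norm_add_le a b]
  have hparallelogram : ‖(2⁻¹ : ℝ) • (a + b) - u‖ ^ 2 =
      (‖a - u‖ ^ 2 + ‖b - u‖ ^ 2) / 2 - ‖a - b‖ ^ 2 / 4 := by
    have hmid : (2⁻¹ : ℝ) • (a + b) - u = (2⁻¹ : ℝ) • ((a - u) + (b - u)) := by module
    have hadd := norm_add_sq_real (a - u) (b - u)
    have hsub := norm_sub_sq_real (a - u) (b - u)
    rw [sub_sub_sub_cancel_right] at hsub
    rw [hmid, norm_smul, Real.norm_of_nonneg (by norm_num), mul_pow]
    linarith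
  unfold proxNormObjective
  linarith [mul_le_mul_of_nonneg_left hnorm hc]

theorem eq_of_forall_proxNormObjective_le {c : ℝ} (hc : 0 ≤ c) {u a b : E}
    (ha : ∀ y, proxNormObjective c u a ≤ proxNormObjective c u y)
    (hb : ∀ y, proxNormObjective c u b ≤ proxNormObjective c u y) : a = b := by
  have hmid := proxNormObjective_midpoint_add_le hc u a b
  have hsq : ‖a - b‖ ^ 2 ≤ 0 := by linarith [ha ((2⁻¹ : ℝ) • (a + b)), ha b, hb a]
  rw [← sub_eq_zero, ← norm_eq_zero]
  exact pow_eq_zero_iff two_ne_zero |>.mp (le_antisymm hsq (sq_nonneg _))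

theorem proxNormObjective_shrink_le {c : ℝ} {u : E} (hc : 0 ≤ c) (hcu : c ≤ ‖u‖) (y : E) :
    proxNormObjective c u ((1 - c / ‖u‖) • u) ≤ proxNormObjective c u y := by
  set k := c / ‖u‖
  have hk : k * ‖u‖ = c := div_mul_cancel_of_imp fun h => le_antisymm (h ▸ hcu) hc
  have hk0 : 0 ≤ k := by positivity
  have hk1 : k ≤ 1 := div_le_one_of_le₀ hcu (norm_nonneg u)
  have hshrink : ‖(1 - k) • u‖ = (1 - k) * ‖u‖ := by
    rw [norm_smul, Real.norm_of_nonneg (by linarith)]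
  have hresidual : (1 - k) • u - u = (-k) • u := by module
  have hexpand : ‖y - u‖ ^ 2 = ‖y - (1 - k) • u‖ ^ 2 - 2 * k * ⟪y, u⟫ +
      2 * k * (1 - k) * ‖u‖ ^ 2 + ‖(-k) • u‖ ^ 2 := by
    have h := norm_add_sq_real (y - (1 - k) • u) ((-k) • u)
    rw [show y - (1 - k) • u + (-k) • u = y - u by module] at h
    rw [h, inner_sub_left, real_inner_smul_right, real_inner_smul_right, real_inner_smul_left,
      real_inner_self_eq_norm_sq]
    ring
  have hCS : k * ⟪y, u⟫ ≤ c * ‖y‖ := by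
    rw [← hk]
    exact mul_le_mul_of_nonneg_left (real_inner_le_norm y u) hk0 |>.trans_eq (by ring)
  have hcross : k * (1 - k) * ‖u‖ ^ 2 = c * ((1 - k) * ‖u‖) := by rw [← hk]; ring
  unfold proxNormObjective
  rw [hshrink, hresidual, hexpand]
  linarith [sq_nonneg ‖y - (1 - k) • u‖]

theorem eq_shrink_of_forall_proxNormObjective_le {c : ℝ} {u p : E} (hc : 0 ≤ c)
    (hcu : c ≤ ‖u‖) (hp : ∀ y, proxNormObjective c u p ≤ proxNormObjective c u y) :
    p = (1 - c / ‖u‖) • u :=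
  eq_of_forall_proxNormObjective_le hc hp (proxNormObjective_shrink_le hc hcu)

theorem hasFDerivAt_norm_of_ne_zero {u : E} (hu : u ≠ 0) :
    HasFDerivAt (fun v : E => ‖v‖) (‖u‖⁻¹ • innerSL ℝ u) u := by
  have hsqrt := (Real.hasDerivAt_sqrt (by positivity : ‖u‖ ^ 2 ≠ 0)).comp_hasFDerivAt u
    (hasStrictFDerivAt_norm_sq u).hasFDerivAt
  simp only [Function.comp_def, Real.sqrt_sq (norm_nonneg _)] at hsqrt
  refine hsqrt.congr_fderiv ?_
  rw [← Nat.cast_smul_eq_nsmul ℝ, smul_smul, Nat.cast_ofNat]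
  congr 1
  field_simp

theorem hasFDerivAt_shrink (c : ℝ) {u : E} (hu : u ≠ 0) :
    HasFDerivAt (fun v : E => (1 - c / ‖v‖) • v)
      ((1 - c / ‖u‖) • ContinuousLinearMap.id ℝ E +
        (c / ‖u‖ ^ 3) • (innerSL ℝ u).smulRight u) u := by
  have hfactor : HasDerivAt (fun t : ℝ => 1 - c / t) (c / ‖u‖ ^ 2) ‖u‖ := by
    have h := ((hasDerivAt_inv (norm_ne_zero_iff.mpr hu)).const_mul c).const_sub 1
    simp only [← div_eq_mul_inv] at h
    exact h.congr_deriv (by ring)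
  have hscalar := hfactor.comp_hasFDerivAt u (hasFDerivAt_norm_of_ne_zero hu)
  refine (hscalar.smul (hasFDerivAt_id u)).congr_fderiv ?_
  ext v
  simp only [Function.comp_apply, add_apply, FunLike.coe_smul, Pi.smul_apply,
    ContinuousLinearMap.smulRight_apply, ContinuousLinearMap.id_apply, innerSL_apply_apply]
  rw [id_eq, smul_smul, smul_smul, smul_eq_mul]
  congr 2
  field_simp

theorem inner_smul_id_add_smul_smulRight_apply (a b : ℝ) (u v w : E) :
    ⟪(a • ContinuousLinearMap.id ℝ E + b • (innerSL ℝ u).smulRight u) v, w⟫ =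
      a * ⟪v, w⟫ + b * (⟪u, v⟫ * ⟪u, w⟫) := by
  simp only [add_apply, FunLike.coe_smul, Pi.smul_apply, ContinuousLinearMap.smulRight_apply,
    ContinuousLinearMap.id_apply, innerSL_apply_apply, inner_add_left, real_inner_smul_left]

theorem inner_smul_id_add_smul_smulRight_apply_comm (a b : ℝ) (u v w : E) :
    ⟪(a • ContinuousLinearMap.id ℝ E + b • (innerSL ℝ u).smulRight u) v, w⟫ =
      ⟪v, (a • ContinuousLinearMap.id ℝ E + b • (innerSL ℝ u).smulRight u) w⟫ := by
  rw [← real_inner_comm v, inner_smul_id_add_smul_smulRight_apply,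
    inner_smul_id_add_smul_smulRight_apply, real_inner_comm v w]
  ring

theorem inner_smul_id_add_smul_smulRight_apply_self_pos {a b : ℝ} (ha : 0 < a) (hb : 0 ≤ b)
    (u : E) {v : E} (hv : v ≠ 0) :
    0 < ⟪(a • ContinuousLinearMap.id ℝ E + b • (innerSL ℝ u).smulRight u) v, v⟫ := by
  rw [inner_smul_id_add_smul_smulRight_apply, real_inner_self_eq_norm_sq]
  have := norm_pos_iff.mpr hv
  exact add_pos_of_pos_of_nonneg (by positivity) (mul_nonneg hb (mul_self_nonneg _))

end

/-- the proximal mapping of `τ⁻¹‖·‖` is differentiable at any point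
`ũ` with `‖ũ‖ > 1/τ`, with symmetric positive definite Jacobian
`V = (1 − 1/(τ‖ũ‖)) I + ũũᵀ/(τ‖ũ‖³)`. -/
theorem prox_norm_differentiable_posdef {m : ℕ} (τ : ℝ) (hτ : 0 < τ)
    (G : EuclideanSpace ℝ (Fin m) → EuclideanSpace ℝ (Fin m))
    (hG : ∀ u y : EuclideanSpace ℝ (Fin m),
      τ⁻¹ * ‖G u‖ + 1 / 2 * ‖G u - u‖ ^ 2 ≤ τ⁻¹ * ‖y‖ + 1 / 2 * ‖y - u‖ ^ 2)
    (u : EuclideanSpace ℝ (Fin m)) (hu : 1 / τ < ‖u‖)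
    (V : EuclideanSpace ℝ (Fin m) →L[ℝ] EuclideanSpace ℝ (Fin m))
    (hV : V = (1 - 1 / (τ * ‖u‖)) • ContinuousLinearMap.id ℝ (EuclideanSpace ℝ (Fin m)) +
      (1 / (τ * ‖u‖ ^ 3)) • ((innerSL ℝ u).smulRight u)) :
    HasFDerivAt G V u ∧ (∀ v w : EuclideanSpace ℝ (Fin m), ⟪V v, w⟫ = ⟪v, V w⟫) ∧
      (∀ v : EuclideanSpace ℝ (Fin m), v ≠ 0 → 0 < ⟪V v, v⟫) := by
  rw [one_div] at hu
  have hunorm : 0 < ‖u‖ := (inv_pos.mpr hτ).trans hu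
  have hV' : V = (1 - τ⁻¹ / ‖u‖) • ContinuousLinearMap.id ℝ (EuclideanSpace ℝ (Fin m)) +
      (τ⁻¹ / ‖u‖ ^ 3) • ((innerSL ℝ u).smulRight u) := by
    rw [hV, ← div_div, ← div_div, one_div]
  subst hV'
  refine ⟨?_, inner_smul_id_add_smul_smulRight_apply_comm _ _ u,
    fun v hv => inner_smul_id_add_smul_smulRight_apply_self_pos
      (sub_pos.mpr ((div_lt_one hunorm).mpr hu)) (by positivity) u hv⟩
  refine (hasFDerivAt_shrink τ⁻¹ (norm_pos_iff.mp hunorm)).congr_of_eventuallyEq ?_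
  filter_upwards [(isOpen_lt continuous_const continuous_norm).mem_nhds hu] with v hv
  exact eq_shrink_of_forall_proxNormObjective_le (inv_nonneg.mpr hτ.le) hv.le (hG v)
end
end

section
/- Let X ∈ ℝ^{m×n}, b ∈ ℝ^m, λ > 0, let p₁ be a norm on ℝⁿ, and let p₂ : ℝⁿ → ℝ be a convex function. For σ > 0, τ > 0 define h̄(σ,τ) = inf_{β ∈ ℝⁿ} { ‖Xβ − b‖ + λ p₁(β) − p₂(0) + (σ/2)‖β‖² + (τ/2)‖Xβ − b‖² }. Then lim_{(σ,τ)→(0⁺,0⁺)} h̄(σ,τ) = inf_{β ∈ ℝⁿ} { ‖Xβ − b‖ + λ p₁(β) } − p₂(0). -/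
open scoped RealInnerProductSpace

noncomputable section

/- Every penalized objective dominates the unpenalized one, so the penalized infimum is at least
the original infimum; conversely, for a near-minimizer `β₀` of the original problem the penalty at
`β₀` vanishes as `(σ, τ) → (0⁺, 0⁺)`, which pushes the penalized infimum below the original one
plus any `ε > 0`. -/

open Filter Set Topology

theorem IsNorm.nonneg_s13 {E : Type*} [AddCommGroup E] [Module ℝ E] {p : E → ℝ} (hp : IsNorm p)
    (x : E) : 0 ≤ p x := by
  have h0 : p 0 = 0 := (hp.2.2 0).mpr rfl
  have hneg : p (-x) = p x := by simpa using hp.2.1 (-1) x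
  have h := hp.1 x (-x)
  rw [add_neg_cancel, h0, hneg] at h
  linarith

theorem tendsto_ciInf_of_eventually_le_of_tendsto {ι α β : Type*}
    [ConditionallyCompleteLinearOrder β] [TopologicalSpace β] [OrderTopology β] [Nonempty α]
    {l : Filter ι} {f : α → β} {F : ι → α → β} (hf : BddBelow (range f))
    (hle : ∀ᶠ t in l, ∀ x, f x ≤ F t x) (hF : ∀ x, Tendsto (fun t => F t x) l (𝓝 (f x))) :
    Tendsto (fun t => ⨅ x, F t x) l (𝓝 (⨅ x, f x)) := by
  refine tendsto_order.2 ⟨fun a ha => ?_, fun a ha => ?_⟩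
  · filter_upwards [hle] with t ht
    exact ha.trans_le (le_ciInf fun x => (ciInf_le hf x).trans (ht x))
  · obtain ⟨x, hx⟩ := exists_lt_of_ciInf_lt ha
    filter_upwards [hle, (hF x).eventually (gt_mem_nhds hx)] with t ht hFx
    obtain ⟨c, hc⟩ := hf
    have hbdd : BddBelow (range (F t)) :=
      ⟨c, by rintro _ ⟨y, rfl⟩; exact (hc ⟨y, rfl⟩).trans (ht y)⟩
    exact (ciInf_le hbdd x).trans_lt hFx

theorem prox_value_convergence_general {m n : ℕ} (X : Matrix (Fin m) (Fin n) ℝ)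
    (b : EuclideanSpace ℝ (Fin m)) (lam : ℝ) (hlam : 0 < lam)
    (p1 : EuclideanSpace ℝ (Fin n) → ℝ) (hp1 : IsNorm p1)
    (p2 : EuclideanSpace ℝ (Fin n) → ℝ)
    (hbar : ℝ → ℝ → ℝ)
    (hhbar : ∀ σ τ : ℝ, hbar σ τ = ⨅ β : EuclideanSpace ℝ (Fin n),
      (‖mulVecE X β - b‖ + lam * p1 β - p2 0 + σ / 2 * ‖β‖ ^ 2 +
        τ / 2 * ‖mulVecE X β - b‖ ^ 2)) :
    Filter.Tendsto (fun q : ℝ × ℝ => hbar q.1 q.2)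
      (nhdsWithin (0, 0) (Set.Ioi (0 : ℝ) ×ˢ Set.Ioi (0 : ℝ)))
      (nhds ((⨅ β : EuclideanSpace ℝ (Fin n), (‖mulVecE X β - b‖ + lam * p1 β)) -
        p2 0)) := by
  set f : EuclideanSpace ℝ (Fin n) → ℝ := fun β => ‖mulVecE X β - b‖ + lam * p1 β
  have hf_nonneg (β) : 0 ≤ f β := add_nonneg (norm_nonneg _) (mul_nonneg hlam.le (hp1.nonneg_s13 β))
  have hf_bdd : BddBelow (range f) := ⟨0, by rintro _ ⟨β, rfl⟩; exact hf_nonneg β⟩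
  have hshift : (⨅ β, f β) - p2 0 = ⨅ β, (f β - p2 0) :=
    (OrderIso.subRight (p2 0)).map_ciInf hf_bdd
  simp only [hhbar, hshift]
  have hg_bdd : BddBelow (range fun β => f β - p2 0) :=
    ⟨-p2 0, by rintro _ ⟨β, rfl⟩; linarith [hf_nonneg β]⟩
  refine tendsto_ciInf_of_eventually_le_of_tendsto hg_bdd ?_ fun β => ?_
  · filter_upwards [self_mem_nhdsWithin] with q ⟨hσ, hτ⟩ β
    have : 0 ≤ q.1 / 2 * ‖β‖ ^ 2 := mul_nonneg (div_nonneg hσ.le zero_le_two) (sq_nonneg _)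
    have : 0 ≤ q.2 / 2 * ‖mulVecE X β - b‖ ^ 2 :=
      mul_nonneg (div_nonneg hτ.le zero_le_two) (sq_nonneg _)
    linarith
  · refine tendsto_nhdsWithin_of_tendsto_nhds ?_
    have hcont : Continuous fun q : ℝ × ℝ =>
        f β - p2 0 + q.1 / 2 * ‖β‖ ^ 2 + q.2 / 2 * ‖mulVecE X β - b‖ ^ 2 := by fun_prop
    simpa using hcont.tendsto (0, 0)

/-- convergence of the optimal value of the proximally regularized
problem to the optimal value of the original problem (shifted by `p₂(0)`)
as the proximal parameters tend to `0⁺`. -/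
theorem prox_value_convergence {m n : ℕ} (X : Matrix (Fin m) (Fin n) ℝ)
    (b : EuclideanSpace ℝ (Fin m)) (lam : ℝ) (hlam : 0 < lam)
    (p1 : EuclideanSpace ℝ (Fin n) → ℝ) (hp1 : IsNorm p1)
    (p2 : EuclideanSpace ℝ (Fin n) → ℝ) (hp2conv : ConvexOn ℝ Set.univ p2)
    (hbar : ℝ → ℝ → ℝ)
    (hhbar : ∀ σ τ : ℝ, hbar σ τ = ⨅ β : EuclideanSpace ℝ (Fin n),
      (‖mulVecE X β - b‖ + lam * p1 β - p2 0 + σ / 2 * ‖β‖ ^ 2 +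
        τ / 2 * ‖mulVecE X β - b‖ ^ 2)) :
    Filter.Tendsto (fun q : ℝ × ℝ => hbar q.1 q.2)
      (nhdsWithin (0, 0) (Set.Ioi (0 : ℝ) ×ˢ Set.Ioi (0 : ℝ)))
      (nhds ((⨅ β : EuclideanSpace ℝ (Fin n), (‖mulVecE X β - b‖ + lam * p1 β)) -
        p2 0)) :=
  prox_value_convergence_general X b lam hlam p1 hp1 p2 hbar hhbar
end
end
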